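/- arXiv:1705.02618 — 3 statements merged into one kernel-verified Lean document; each statement's English description precedes it below -/
import Mathlib

section
/- Let a < b be real numbers, and for a real number r let Q_r(x) = (x - r)² be the quadratic with double root at r. For λ, μ ≥ 0 with λ + μ = 1 and λμ > 0, the quadratic λQ_a + μQ_b is positive definite and its root in the upper half-plane is (λa + μb) + i(b - a)√(λμ), which lies on the semicircle centered at ((a+b)/2, 0) with radius (b-a)/2. -/
/-- For `a < b` and `λ, μ ≥ 0` with `λ + μ = 1` and `λμ > 0`, the quadratic
`λ(x-a)² + μ(x-b)² = x² - 2px + q` (with `p = λa + μb`, `q = λa² + μb²`) is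
positive definite; its root in the upper half-plane is `(λa + μb) + i(b-a)√(λμ)`,
which lies on the semicircle centered at `((a+b)/2, 0)` with radius `(b-a)/2`. -/
theorem convex_comb_on_geodesic (a b l m : ℝ) (hab : a < b)
    (hl : 0 ≤ l) (hm : 0 ≤ m) (hsum : l + m = 1) (hpos : 0 < l * m) :
    0 < (l * a ^ 2 + m * b ^ 2) - (l * a + m * b) ^ 2 ∧
    Real.sqrt ((l * a ^ 2 + m * b ^ 2) - (l * a + m * b) ^ 2)
      = (b - a) * Real.sqrt (l * m) ∧
    ((l * a + m * b) - (a + b) / 2) ^ 2 + ((b - a) * Real.sqrt (l * m)) ^ 2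
      = ((b - a) / 2) ^ 2 := by
  have hkey : (l * a ^ 2 + m * b ^ 2) - (l * a + m * b) ^ 2 = l * m * (b - a) ^ 2 := by
    have : m = 1 - l := by linarith
    subst this; ring
  have hba : (0:ℝ) < b - a := by linarith
  refine ⟨by rw [hkey]; positivity, ?_, ?_⟩
  · rw [hkey, Real.sqrt_mul hpos.le, Real.sqrt_sq hba.le, mul_comm]
  · rw [mul_pow, Real.sq_sqrt hpos.le]
    have : m = 1 - l := by linarith
    subst this; ring
end

section
/- Let ω₁, ω₂ be points in the closed upper half-plane (including boundary ℝ ∪ {∞}) and Q_{ω₁}, Q_{ω₂} the corresponding quadratics Q_ω(X,Z) = (X - ωZ)(X - ω̄Z). For any s, t ≥ 0 with s + t = 1, the zero of sQ_{ω₁} + tQ_{ω₂} lies on the hyperbolic geodesic segment joining ω₁ and ω₂. -/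
/-!
For real `x` we have `Q_ω(x, 1) = |x - ω|²`, and likewise `X² - 2pXZ + qZ²` evaluated at `(x, 1)` is
`|x - z|²` for its zero `z`. Hence the zero `z` of `sQ_{ω₁} + tQ_{ω₂}` satisfies
`|x - z|² = s|x - ω₁|² + t|x - ω₂|²` for every real `x`: if `ω₁, ω₂` lie on a semicircle
centred at `x`, so does `z`, and `Re z = s Re ω₁ + t Re ω₂` lies between their real parts.
On a vertical geodesic, `Im z = √(s (Im ω₁)² + t (Im ω₂)²)` lies between the imaginary parts.
-/

/-- `p` lies on the hyperbolic geodesic segment joining `z` and `w` in the closed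
upper half-plane: either all three lie on a vertical line with `p` between `z`
and `w`, or all three lie on a semicircle centered on the real axis with the real
part of `p` between those of `z` and `w`. -/
def OnHypSeg (z w p : ℂ) : Prop :=
  0 ≤ p.im ∧
  ((z.re = w.re ∧ p.re = z.re ∧ p.im ∈ Set.uIcc z.im w.im) ∨
    (∃ c r : ℝ, ‖z - c‖ = r ∧ ‖w - c‖ = r ∧
      ‖p - c‖ = r ∧ p.re ∈ Set.uIcc z.re w.re))

open Complex Set

lemma convex_comb_mem_uIcc {𝕜 : Type*} [Field 𝕜] [LinearOrder 𝕜] [IsStrictOrderedRing 𝕜]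
    {a c s t : 𝕜} (hs : 0 ≤ s) (ht : 0 ≤ t) (hst : s + t = 1) :
    s * a + t * c ∈ uIcc a c :=
  segment_eq_uIcc a c ▸ ⟨s, t, hs, ht, hst, rfl⟩

lemma sqrt_convex_comb_sq_mem_uIcc {b d s t : ℝ} (hb : 0 ≤ b) (hd : 0 ≤ d)
    (hs : 0 ≤ s) (ht : 0 ≤ t) (hst : s + t = 1) :
    √(s * b ^ 2 + t * d ^ 2) ∈ uIcc b d := by
  have h := Real.sqrt_monotone.mapsTo_uIcc
    (convex_comb_mem_uIcc (a := b ^ 2) (c := d ^ 2) hs ht hst)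
  rwa [Real.sqrt_sq hb, Real.sqrt_sq hd] at h

namespace Complex

lemma sq_norm_sub_ofReal (ω : ℂ) (x : ℝ) : ‖ω - x‖ ^ 2 = ‖ω‖ ^ 2 - 2 * x * ω.re + x ^ 2 := by
  simp only [Complex.sq_norm, normSq_apply, sub_re, sub_im, ofReal_re, ofReal_im]
  ring

lemma exists_ofReal_norm_sub_eq {ω₁ ω₂ : ℂ} (h : ω₁.re ≠ ω₂.re) :
    ∃ x : ℝ, ‖ω₁ - x‖ = ‖ω₂ - x‖ := by
  refine ⟨(‖ω₁‖ ^ 2 - ‖ω₂‖ ^ 2) / (2 * (ω₁.re - ω₂.re)), ?_⟩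
  rw [← sq_eq_sq₀ (norm_nonneg _) (norm_nonneg _), sq_norm_sub_ofReal, sq_norm_sub_ofReal]
  have hden : 2 * (ω₁.re - ω₂.re) ≠ 0 := mul_ne_zero two_ne_zero (sub_ne_zero.mpr h)
  field_simp
  ring

end Complex

noncomputable def zeroOfQuadratic (p q : ℝ) : ℂ := p + (√(q - p ^ 2) : ℝ) * I

@[simp] lemma zeroOfQuadratic_re (p q : ℝ) : (zeroOfQuadratic p q).re = p := by
  simp [zeroOfQuadratic]

@[simp] lemma zeroOfQuadratic_im (p q : ℝ) : (zeroOfQuadratic p q).im = √(q - p ^ 2) := by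
  simp [zeroOfQuadratic]

lemma sq_norm_zeroOfQuadratic_sub_ofReal {p q : ℝ} (h : p ^ 2 ≤ q) (x : ℝ) :
    ‖zeroOfQuadratic p q - x‖ ^ 2 = q - 2 * x * p + x ^ 2 := by
  have hnorm := sq_norm_sub_sq_re (zeroOfQuadratic p q)
  rw [zeroOfQuadratic_re, zeroOfQuadratic_im, Real.sq_sqrt (sub_nonneg.mpr h)] at hnorm
  rw [sq_norm_sub_ofReal, zeroOfQuadratic_re]
  linear_combination hnorm

section Comb

variable (ω₁ ω₂ : ℂ) {s t : ℝ}

noncomputable def combZero (s t : ℝ) : ℂ :=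
  zeroOfQuadratic (s * ω₁.re + t * ω₂.re) (s * ‖ω₁‖ ^ 2 + t * ‖ω₂‖ ^ 2)

lemma comb_norm_sq_sub_comb_re_sq (hst : s + t = 1) :
    s * ‖ω₁‖ ^ 2 + t * ‖ω₂‖ ^ 2 - (s * ω₁.re + t * ω₂.re) ^ 2
      = s * t * (ω₁.re - ω₂.re) ^ 2 + s * ω₁.im ^ 2 + t * ω₂.im ^ 2 := by
  obtain rfl : s = 1 - t := by linarith
  simp only [Complex.sq_norm, normSq_apply]
  ring

lemma comb_re_sq_le_comb_norm_sq (hs : 0 ≤ s) (ht : 0 ≤ t) (hst : s + t = 1) :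
    (s * ω₁.re + t * ω₂.re) ^ 2 ≤ s * ‖ω₁‖ ^ 2 + t * ‖ω₂‖ ^ 2 := by
  rw [← sub_nonneg, comb_norm_sq_sub_comb_re_sq ω₁ ω₂ hst]
  positivity

lemma sq_norm_combZero_sub_ofReal (hs : 0 ≤ s) (ht : 0 ≤ t) (hst : s + t = 1) (x : ℝ) :
    ‖combZero ω₁ ω₂ s t - x‖ ^ 2 = s * ‖ω₁ - x‖ ^ 2 + t * ‖ω₂ - x‖ ^ 2 := by
  rw [combZero, sq_norm_zeroOfQuadratic_sub_ofReal (comb_re_sq_le_comb_norm_sq ω₁ ω₂ hs ht hst),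
    sq_norm_sub_ofReal, sq_norm_sub_ofReal]
  linear_combination -x ^ 2 * hst

lemma combZero_im_of_re_eq (hst : s + t = 1) (h : ω₁.re = ω₂.re) :
    (combZero ω₁ ω₂ s t).im = √(s * ω₁.im ^ 2 + t * ω₂.im ^ 2) := by
  rw [combZero, zeroOfQuadratic_im, comb_norm_sq_sub_comb_re_sq ω₁ ω₂ hst, h, sub_self]
  ring_nf

end Comb

/-- The quadratic `Q_ω(X,Z) = X² - 2Re(ω)XZ + |ω|²Z²`. For `s, t ≥ 0` with
`s + t = 1`, the zero of `sQ_{ω₁} + tQ_{ω₂}`, namely `p + i√(q - p²)` where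
`p = s·Re ω₁ + t·Re ω₂` and `q = s|ω₁|² + t|ω₂|²`, lies on the hyperbolic geodesic
segment joining `ω₁` and `ω₂`. -/
theorem zero_of_comb_on_segment (ω₁ ω₂ : ℂ) (h₁ : 0 ≤ ω₁.im) (h₂ : 0 ≤ ω₂.im)
    (s t : ℝ) (hs : 0 ≤ s) (ht : 0 ≤ t) (hst : s + t = 1) :
    let p := s * ω₁.re + t * ω₂.re
    let q := s * ‖ω₁‖ ^ 2 + t * ‖ω₂‖ ^ 2
    OnHypSeg ω₁ ω₂ ((p : ℂ) + (Real.sqrt (q - p ^ 2) : ℝ) * Complex.I) := by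
  show OnHypSeg ω₁ ω₂ (combZero ω₁ ω₂ s t)
  have hre : (combZero ω₁ ω₂ s t).re = s * ω₁.re + t * ω₂.re := zeroOfQuadratic_re _ _
  refine ⟨by rw [combZero, zeroOfQuadratic_im]; positivity, ?_⟩
  by_cases hvert : ω₁.re = ω₂.re
  · refine .inl ⟨hvert, ?_, ?_⟩
    · rw [hre, ← hvert, ← add_mul, hst, one_mul]
    · rw [combZero_im_of_re_eq ω₁ ω₂ hst hvert]
      exact sqrt_convex_comb_sq_mem_uIcc h₁ h₂ hs ht hst
  · obtain ⟨x, hx⟩ := exists_ofReal_norm_sub_eq hvert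
    refine .inr ⟨x, ‖ω₁ - x‖, rfl, hx.symm, ?_, hre ▸ convex_comb_mem_uIcc hs ht hst⟩
    rw [← sq_eq_sq₀ (norm_nonneg _) (norm_nonneg _), sq_norm_combZero_sub_ofReal ω₁ ω₂ hs ht hst,
      hx, ← add_mul, hst, one_mul]
end

section
/- Let ω₁, ..., ωₙ be points in the closed upper half-plane. For any λ₁, ..., λₙ ≥ 0 with Σλᵢ = 1, the zero of the positive definite quadratic Σᵢ λᵢ Q_{ωᵢ} lies in the hyperbolic convex hull of {ω₁, ..., ωₙ}. -/
/-- A subset of the closed upper half-plane is hyperbolically convex if it contains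
the geodesic segment between any two of its points. -/
def HypConvex (S : Set ℂ) : Prop :=
  (∀ p ∈ S, 0 ≤ p.im) ∧ ∀ z ∈ S, ∀ w ∈ S, ∀ p : ℂ, OnHypSeg z w p → p ∈ S

/-- The hyperbolic convex hull: the intersection of all hyperbolically convex sets
containing `A`. -/
def hypConvexHull (A : Set ℂ) : Set ℂ :=
  ⋂₀ {S : Set ℂ | HypConvex S ∧ A ⊆ S}

open Complex Set

/-- `v = (p, q)` encodes `X² - 2pXZ + qZ²`; when `p² ≤ q` this is its zero in the closed
upper half-plane. -/
noncomputable def quadraticZero (v : ℝ × ℝ) : ℂ :=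
  (v.1 : ℂ) + (Real.sqrt (v.2 - v.1 ^ 2) : ℝ) * I

/-- The coefficients `(Re ω, |ω|²)` of `Q_ω = X² - 2 Re ω XZ + |ω|² Z²`. -/
noncomputable def quadCoeffs (ω : ℂ) : ℝ × ℝ :=
  (ω.re, ‖ω‖ ^ 2)

@[simp]
lemma quadraticZero_re (v : ℝ × ℝ) : (quadraticZero v).re = v.1 := by
  simp [quadraticZero]

@[simp]
lemma quadraticZero_im (v : ℝ × ℝ) : (quadraticZero v).im = Real.sqrt (v.2 - v.1 ^ 2) := by
  simp [quadraticZero]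

lemma norm_sq_quadraticZero {v : ℝ × ℝ} (hv : v.1 ^ 2 ≤ v.2) : ‖quadraticZero v‖ ^ 2 = v.2 := by
  rw [Complex.sq_norm, normSq_apply, quadraticZero_re, quadraticZero_im, ← sq, ← sq,
    Real.sq_sqrt (sub_nonneg.2 hv)]
  ring

lemma re_sq_le_norm_sq (ω : ℂ) : ω.re ^ 2 ≤ ‖ω‖ ^ 2 := by
  rw [Complex.sq_norm, normSq_apply]
  nlinarith [mul_self_nonneg ω.im]

lemma quadraticZero_quadCoeffs {ω : ℂ} (hω : 0 ≤ ω.im) : quadraticZero (quadCoeffs ω) = ω := by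
  have him : ‖ω‖ ^ 2 - ω.re ^ 2 = ω.im ^ 2 := by
    rw [Complex.sq_norm, normSq_apply]; ring
  apply Complex.ext <;> simp [quadCoeffs, him, Real.sqrt_sq hω]

lemma norm_sub_ofReal_sq (u : ℂ) (c : ℝ) : ‖u - c‖ ^ 2 = ‖u‖ ^ 2 - 2 * c * u.re + c ^ 2 := by
  simp only [Complex.sq_norm, normSq_apply, sub_re, sub_im, ofReal_re, ofReal_im]
  ring

lemma Real.mem_uIcc_of_combo {x y a b : ℝ} (ha : 0 ≤ a) (hb : 0 ≤ b) (hab : a + b = 1) :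
    a * x + b * y ∈ uIcc x y :=
  segment_eq_uIcc x y ▸ ⟨a, b, ha, hb, hab, rfl⟩

lemma Real.sqrt_mem_uIcc {s x y : ℝ} (h : s ∈ uIcc x y) :
    Real.sqrt s ∈ uIcc (Real.sqrt x) (Real.sqrt y) :=
  Real.sqrt_monotone.monotoneOn _ |>.image_uIcc_subset (mem_image_of_mem _ h)

lemma combo_fst_sq_le_snd {v w : ℝ × ℝ} (hv : v.1 ^ 2 ≤ v.2) (hw : w.1 ^ 2 ≤ w.2)
    {a b : ℝ} (ha : 0 ≤ a) (hb : 0 ≤ b) (hab : a + b = 1) :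
    (a • v + b • w).1 ^ 2 ≤ (a • v + b • w).2 :=
  ((even_two.convexOn_pow (𝕜 := ℝ)).convex_epigraph ⟨mem_univ _, hv⟩ ⟨mem_univ _, hw⟩
    ha hb hab).2

theorem onHypSeg_quadraticZero_combo {v w : ℝ × ℝ} (hv : v.1 ^ 2 ≤ v.2) (hw : w.1 ^ 2 ≤ w.2)
    {a b : ℝ} (ha : 0 ≤ a) (hb : 0 ≤ b) (hab : a + b = 1) :
    OnHypSeg (quadraticZero v) (quadraticZero w) (quadraticZero (a • v + b • w)) := by
  have hu_fst : (a • v + b • w).1 = a * v.1 + b * w.1 := rfl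
  have hu_snd : (a • v + b • w).2 = a * v.2 + b * w.2 := rfl
  refine ⟨by simp [Real.sqrt_nonneg], ?_⟩
  simp only [quadraticZero_re, quadraticZero_im]
  by_cases hvert : v.1 = w.1
  · have hp : (a • v + b • w).1 = v.1 := by rw [hu_fst, ← hvert, ← add_mul, hab, one_mul]
    have hdisc : (a • v + b • w).2 - (a • v + b • w).1 ^ 2
        = a * (v.2 - v.1 ^ 2) + b * (w.2 - w.1 ^ 2) := by
      rw [hp, hu_snd, ← hvert]; linear_combination v.1 ^ 2 * hab
    refine Or.inl ⟨hvert, hp, ?_⟩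
    rw [hdisc]
    exact Real.sqrt_mem_uIcc (Real.mem_uIcc_of_combo ha hb hab)
  · -- the centre `c` is where the perpendicular bisector of the two zeros meets `ℝ`
    set c := (v.2 - w.2) / (2 * (v.1 - w.1))
    have hc : v.2 - 2 * c * v.1 = w.2 - 2 * c * w.1 := by
      have : 2 * (v.1 - w.1) ≠ 0 := mul_ne_zero two_ne_zero (sub_ne_zero.2 hvert)
      simp only [c]; field_simp; ring
    have hdist : ∀ x : ℝ × ℝ, x.1 ^ 2 ≤ x.2 →
        ‖quadraticZero x - c‖ ^ 2 = x.2 - 2 * c * x.1 + c ^ 2 := fun x hx => by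
      rw [norm_sub_ofReal_sq, norm_sq_quadraticZero hx, quadraticZero_re]
    have hu := combo_fst_sq_le_snd hv hw ha hb hab
    have hsame : ∀ x y : ℝ × ℝ, x.1 ^ 2 ≤ x.2 → y.1 ^ 2 ≤ y.2 →
        x.2 - 2 * c * x.1 = y.2 - 2 * c * y.1 → ‖quadraticZero x - c‖ = ‖quadraticZero y - c‖ :=
      fun x y hx hy hxy => by
        rw [← sq_eq_sq₀ (norm_nonneg _) (norm_nonneg _), hdist x hx, hdist y hy, hxy]
    refine Or.inr ⟨c, ‖quadraticZero v - c‖, rfl, hsame w v hw hv hc.symm,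
      hsame _ v hu hv ?_, by rw [hu_fst]; exact Real.mem_uIcc_of_combo ha hb hab⟩
    rw [hu_fst, hu_snd]
    linear_combination b * hc.symm + (v.2 - 2 * c * v.1) * hab

lemma OnHypSeg.mem_hypConvexHull {A : Set ℂ} {z w p : ℂ} (hp : OnHypSeg z w p)
    (hz : z ∈ hypConvexHull A) (hw : w ∈ hypConvexHull A) : p ∈ hypConvexHull A :=
  fun S hS => hS.1.2 z (hz S hS) w (hw S hS) p hp

def quadraticsWithZeroIn (A : Set ℂ) : Set (ℝ × ℝ) :=
  {v | v.1 ^ 2 ≤ v.2 ∧ quadraticZero v ∈ hypConvexHull A}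

theorem convex_quadraticsWithZeroIn (A : Set ℂ) : Convex ℝ (quadraticsWithZeroIn A) := by
  rintro v ⟨hv, hvA⟩ w ⟨hw, hwA⟩ a b ha hb hab
  exact ⟨combo_fst_sq_le_snd hv hw ha hb hab,
    (onHypSeg_quadraticZero_combo hv hw ha hb hab).mem_hypConvexHull hvA hwA⟩

lemma quadCoeffs_mem_quadraticsWithZeroIn {A : Set ℂ} {ω : ℂ} (hω : 0 ≤ ω.im) (hωA : ω ∈ A) :
    quadCoeffs ω ∈ quadraticsWithZeroIn A :=
  ⟨re_sq_le_norm_sq ω, (quadraticZero_quadCoeffs hω).symm ▸ fun _ hS => hS.2 hωA⟩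

theorem zero_of_comb_mem_convexHull_general (n : ℕ) (ω : Fin n → ℂ)
    (hω : ∀ i, 0 ≤ (ω i).im) (l : Fin n → ℝ) (hl : ∀ i, 0 ≤ l i)
    (hsum : ∑ i, l i = 1) :
    let p := ∑ i, l i * (ω i).re
    let q := ∑ i, l i * ‖ω i‖ ^ 2
    ((p : ℂ) + (Real.sqrt (q - p ^ 2) : ℝ) * Complex.I)
      ∈ hypConvexHull (Set.range ω) := by
  intro p q
  have hcomb : ∑ i, l i • quadCoeffs (ω i) = (p, q) := by
    ext <;> simp [Prod.fst_sum, Prod.snd_sum, quadCoeffs, p, q]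
  have hmem : ∑ i, l i • quadCoeffs (ω i) ∈ quadraticsWithZeroIn (Set.range ω) :=
    (convex_quadraticsWithZeroIn _).sum_mem (fun i _ => hl i) hsum
      (fun i _ => quadCoeffs_mem_quadraticsWithZeroIn (hω i) ⟨i, rfl⟩)
  rw [hcomb] at hmem
  exact hmem.2

/-- For points `ω₁, …, ωₙ` in the closed upper half-plane and weights `λᵢ ≥ 0`
summing to 1, the zero of the positive definite quadratic `Σ λᵢ Q_{ωᵢ}`, namely
`p + i√(q - p²)` with `p = Σ λᵢ Re ωᵢ`, `q = Σ λᵢ |ωᵢ|²`, lies in the hyperbolic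
convex hull of `{ω₁, …, ωₙ}`. -/
theorem zero_of_comb_mem_convexHull (n : ℕ) (ω : Fin n → ℂ)
    (hω : ∀ i, 0 ≤ (ω i).im) (l : Fin n → ℝ) (hl : ∀ i, 0 ≤ l i)
    (hsum : ∑ i, l i = 1)
    (hpd : (∑ i, l i * (ω i).re) ^ 2 < ∑ i, l i * ‖ω i‖ ^ 2) :
    let p := ∑ i, l i * (ω i).re
    let q := ∑ i, l i * ‖ω i‖ ^ 2
    ((p : ℂ) + (Real.sqrt (q - p ^ 2) : ℝ) * Complex.I)
      ∈ hypConvexHull (Set.range ω) :=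
  zero_of_comb_mem_convexHull_general n ω hω l hl hsum
end
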